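/- arXiv:1510.02045 — 7 statements merged into one kernel-verified Lean document; each statement's English description precedes it below -/
import Mathlib

section
/- Fix μ in the convex hull M of a finite set Ω ⊆ ℝⁿ and fix ν ∈ M. Then there exists a minimal face X_ν of M (a face being a subset X ⊆ Ω that is the set of maximizers over Ω of some linear functional, or the empty set) such that ν ∈ conv(X_ν ∪ {μ}), and for every face X with ν ∈ conv(X ∪ {μ}) one has X_ν ⊆ X. -/
/-!
Faces of `Ω` are exactly the sets `{ω ∈ Ω | c ≤ ⟪u, ω⟫}` with `⟪u, ·⟫ ≤ c` on `Ω` (the empty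
face comes from `c` above the maximum), so faces are closed under intersection. The faces `X`
with `ν ∈ conv(X ∪ {μ})` are closed under intersection too: write `ν` on segments `[μ, x]` and
`[μ, y]` with `x ∈ conv X`, `y ∈ conv Y`, and say the weight `t` on `x` is at least the weight
`s` on `y`. The functional exposing `X` attains its maximum at `x` and is at most that maximum at
`μ`; comparing its values at `ν` forces it to be maximal at `y` too (if `s > 0`), whence
`y ∈ conv(X ∩ Y)`. A minimal such face, which exists since there are finitely many, is therefore
the least one.
-/

open scoped RealInnerProductSpace

/-- A face of `M = conv(Ω)`: either the empty set, or the set of maximizers over `Ω`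
of some linear functional. -/
def IsFace {n : ℕ} (Ω X : Set (EuclideanSpace ℝ (Fin n))) : Prop :=
  X = ∅ ∨ ∃ u : EuclideanSpace ℝ (Fin n),
    X = {ω ∈ Ω | ∀ ω' ∈ Ω, ⟪u, ω'⟫ ≤ ⟪u, ω⟫}

open Set

section Convex

variable {𝕜 E : Type*} [Field 𝕜] [LinearOrder 𝕜] [IsStrictOrderedRing 𝕜]
  [AddCommGroup E] [Module 𝕜 E] {S : Set E} {f : E →ₗ[𝕜] 𝕜} {c : 𝕜} {x y z μ ν : E}

theorem LinearMap.le_of_mem_convexHull (hS : ∀ ω ∈ S, f ω ≤ c) (hz : z ∈ convexHull 𝕜 S) :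
    f z ≤ c :=
  convexHull_min hS (convex_halfSpace_le f.isLinear c) hz

theorem LinearMap.ge_of_mem_convexHull (hS : ∀ ω ∈ S, c ≤ f ω) (hz : z ∈ convexHull 𝕜 S) :
    c ≤ f z :=
  convexHull_min hS (convex_halfSpace_ge f.isLinear c) hz

theorem mem_convexHull_sep_of_le_apply (hS : ∀ ω ∈ S, f ω ≤ c) (hz : z ∈ convexHull 𝕜 S)
    (hcz : c ≤ f z) : z ∈ convexHull 𝕜 {ω ∈ S | c ≤ f ω} := by
  set T := {ω ∈ S | c ≤ f ω}
  have hT : ∀ x ∈ convexHull 𝕜 T, f x ≤ c := fun x hx =>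
    f.le_of_mem_convexHull hS (convexHull_mono (sep_subset _ _) hx)
  have hconvex : Convex 𝕜 (convexHull 𝕜 T ∪ {x | f x < c}) := by
    refine convex_iff_forall_pos.2 ?_
    rintro x (hx | hx) y (hy | hy) a b ha hb hab
    · exact Or.inl (convex_convexHull 𝕜 T hx hy ha.le hb.le hab)
    · refine Or.inr (show f (a • x + b • y) < c from ?_)
      rw [map_add, map_smul, map_smul, smul_eq_mul, smul_eq_mul]
      have hc : a * c + b * c = c := by rw [← add_mul, hab, one_mul]
      linarith [mul_le_mul_of_nonneg_left (hT x hx) ha.le,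
        mul_lt_mul_of_pos_left (show f y < c from hy) hb]
    · refine Or.inr (show f (a • x + b • y) < c from ?_)
      rw [map_add, map_smul, map_smul, smul_eq_mul, smul_eq_mul]
      have hc : a * c + b * c = c := by rw [← add_mul, hab, one_mul]
      linarith [mul_lt_mul_of_pos_left (show f x < c from hx) ha,
        mul_le_mul_of_nonneg_left (hT y hy) hb.le]
    · exact Or.inr (convex_halfSpace_lt f.isLinear c hx hy ha.le hb.le hab)
  have hST : S ⊆ convexHull 𝕜 T ∪ {x | f x < c} := fun ω hω =>
    (hS ω hω).lt_or_eq.symm.imp (fun h => subset_convexHull 𝕜 T ⟨hω, h.ge⟩) id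
  exact (convexHull_min hST hconvex hz).resolve_right hcz.not_gt

theorem mem_convexHull_sep_union_singleton_of_le {Y : Set E} {s t : 𝕜}
    (hY : ∀ ω ∈ Y, f ω ≤ c) (hμ : f μ ≤ c) (hx : c ≤ f x) (hy : y ∈ convexHull 𝕜 Y)
    (hs : s ∈ Icc (0 : 𝕜) 1) (hst : s ≤ t)
    (hνx : (1 - t) • μ + t • x = ν) (hνy : (1 - s) • μ + s • y = ν) :
    ν ∈ convexHull 𝕜 ({ω ∈ Y | c ≤ f ω} ∪ {μ}) := by
  have hμ' : μ ∈ convexHull 𝕜 ({ω ∈ Y | c ≤ f ω} ∪ {μ}) :=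
    subset_convexHull 𝕜 _ (mem_union_right _ rfl)
  rcases hs.1.eq_or_lt with rfl | hs_pos
  · simpa [← hνy] using hμ'
  have hfν : f ν = (1 - t) * f μ + t * f x := by simp [← hνx]
  have hfν' : f ν = (1 - s) * f μ + s * f y := by simp [← hνy]
  have hfy : c ≤ f y := by
    refine le_of_mul_le_mul_left ?_ hs_pos
    linarith [mul_nonneg (sub_nonneg.2 hst) (sub_nonneg.2 hμ),
      mul_le_mul_of_nonneg_left hx (hs.1.trans hst)]
  have hyT := mem_convexHull_sep_of_le_apply hY hy hfy
  rw [← hνy]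
  exact convex_convexHull 𝕜 _ hμ' (convexHull_mono subset_union_left hyT)
    (by linarith [hs.2]) hs.1 (by ring)

theorem eq_or_exists_of_mem_convexHull_union_singleton {X : Set E}
    (h : ν ∈ convexHull 𝕜 (X ∪ {μ})) :
    ν = μ ∨ ∃ x ∈ convexHull 𝕜 X, ∃ t ∈ Icc (0 : 𝕜) 1, (1 - t) • μ + t • x = ν := by
  rcases X.eq_empty_or_nonempty with rfl | hX
  · left
    simpa using h
  right
  rw [union_singleton, convexHull_insert hX, convexJoin_singleton_left] at h
  obtain ⟨x, hx, hν⟩ := mem_iUnion₂.1 h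
  rw [segment_eq_image] at hν
  exact ⟨x, hx, hν⟩

end Convex

section Face

variable {n : ℕ} {Ω X Y : Set (EuclideanSpace ℝ (Fin n))} {μ ν : EuclideanSpace ℝ (Fin n)}

theorem isFace_iff : IsFace Ω X ↔ ∃ (u : EuclideanSpace ℝ (Fin n)) (c : ℝ),
    (∀ ω ∈ Ω, ⟪u, ω⟫ ≤ c) ∧ X = {ω ∈ Ω | c ≤ ⟪u, ω⟫} := by
  constructor
  · intro h
    rcases X.eq_empty_or_nonempty with rfl | ⟨ω₀, hω₀⟩
    · exact ⟨0, 1, by simp, by ext; simp⟩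
    rcases h with h | ⟨u, rfl⟩
    · exact absurd h (nonempty_of_mem hω₀).ne_empty
    refine ⟨u, ⟪u, ω₀⟫, hω₀.2, ?_⟩
    ext ω
    exact ⟨fun ⟨hω, h⟩ => ⟨hω, h ω₀ hω₀.1⟩,
      fun ⟨hω, h⟩ => ⟨hω, fun ω' hω' => (hω₀.2 ω' hω').trans h⟩⟩
  · rintro ⟨u, c, hu, rfl⟩
    rcases eq_empty_or_nonempty {ω ∈ Ω | c ≤ ⟪u, ω⟫} with h | ⟨ω₀, hω₀Ω, hω₀⟩
    · exact Or.inl h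
    refine Or.inr ⟨u, ?_⟩
    ext ω
    exact ⟨fun ⟨hω, h⟩ => ⟨hω, fun ω' hω' => (hu ω' hω').trans h⟩,
      fun ⟨hω, h⟩ => ⟨hω, hω₀.trans (h ω₀ hω₀Ω)⟩⟩

theorem isFace_self : IsFace Ω Ω :=
  isFace_iff.2 ⟨0, 0, by simp, by simp⟩

theorem IsFace.subset (h : IsFace Ω X) : X ⊆ Ω := by
  obtain ⟨u, c, -, rfl⟩ := isFace_iff.1 h
  exact sep_subset _ _

theorem IsFace.inter (hX : IsFace Ω X) (hY : IsFace Ω Y) : IsFace Ω (X ∩ Y) := by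
  obtain ⟨u, c, hu, rfl⟩ := isFace_iff.1 hX
  obtain ⟨v, d, hv, rfl⟩ := isFace_iff.1 hY
  refine isFace_iff.2 ⟨u + v, c + d, fun ω hω => ?_, ?_⟩
  · rw [inner_add_left]
    exact add_le_add (hu ω hω) (hv ω hω)
  · ext ω
    simp only [mem_inter_iff, mem_sep_iff, inner_add_left]
    constructor
    · rintro ⟨⟨hω, h₁⟩, -, h₂⟩
      exact ⟨hω, add_le_add h₁ h₂⟩
    · rintro ⟨hω, h⟩
      exact ⟨⟨hω, by linarith [hv ω hω]⟩, hω, by linarith [hu ω hω]⟩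

theorem IsFace.mem_convexHull_inter_union_singleton (hμ : μ ∈ convexHull ℝ Ω)
    (hX : IsFace Ω X) (hY : IsFace Ω Y) (hνX : ν ∈ convexHull ℝ (X ∪ {μ}))
    (hνY : ν ∈ convexHull ℝ (Y ∪ {μ})) : ν ∈ convexHull ℝ (X ∩ Y ∪ {μ}) := by
  have hμ' : μ ∈ convexHull ℝ (X ∩ Y ∪ {μ}) := subset_convexHull ℝ _ (mem_union_right _ rfl)
  obtain rfl | ⟨x, hx, t, ht, hνx⟩ := eq_or_exists_of_mem_convexHull_union_singleton hνX
  · exact hμ'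
  obtain rfl | ⟨y, hy, s, hs, hνy⟩ := eq_or_exists_of_mem_convexHull_union_singleton hνY
  · exact hμ'
  clear hμ'
  wlog hst : s ≤ t generalizing X Y x y s t
  · rw [inter_comm]
    exact this hY hX hνY hνX y hy s hs hνy x hx t ht hνx (le_of_not_ge hst)
  obtain ⟨u, c, hu, rfl⟩ := isFace_iff.1 hX
  have hYΩ := hY.subset
  refine convexHull_mono (union_subset_union_left _ ?_)
    (mem_convexHull_sep_union_singleton_of_le (f := innerₗ _ u) (fun ω hω => hu ω (hYΩ hω))
      ((innerₗ _ u).le_of_mem_convexHull hu hμ)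
      ((innerₗ _ u).ge_of_mem_convexHull (fun ω hω => hω.2) hx) hy hs hst hνx hνy)
  exact fun ω ⟨hωY, hωc⟩ => ⟨⟨hYΩ hωY, hωc⟩, hωY⟩

end Face

/-- Existence of the minimal face: for fixed `μ, ν ∈ M = conv(Ω)`, there is a minimal
face `X_ν` with `ν ∈ conv(X_ν ∪ {μ})`, contained in every face `X` with
`ν ∈ conv(X ∪ {μ})`. -/
theorem exists_minimal_face (n : ℕ) (Ω : Finset (EuclideanSpace ℝ (Fin n)))
    (μ ν : EuclideanSpace ℝ (Fin n))
    (hμ : μ ∈ convexHull ℝ (↑Ω : Set (EuclideanSpace ℝ (Fin n))))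
    (hν : ν ∈ convexHull ℝ (↑Ω : Set (EuclideanSpace ℝ (Fin n)))) :
    ∃ Xν : Set (EuclideanSpace ℝ (Fin n)),
      IsFace (↑Ω) Xν ∧ ν ∈ convexHull ℝ (Xν ∪ {μ}) ∧
      ∀ X : Set (EuclideanSpace ℝ (Fin n)),
        IsFace (↑Ω) X → ν ∈ convexHull ℝ (X ∪ {μ}) → Xν ⊆ X := by
  set 𝒞 := {X | IsFace (↑Ω) X ∧ ν ∈ convexHull ℝ (X ∪ {μ})}
  have h𝒞 : 𝒞.Finite := Ω.finite_toSet.finite_subsets.subset fun X hX => hX.1.subset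
  obtain ⟨Xν, hmin⟩ := h𝒞.exists_minimal ⟨Ω, isFace_self, convexHull_mono subset_union_left hν⟩
  obtain ⟨hface, hνXν⟩ := hmin.prop
  refine ⟨Xν, hface, hνXν, fun X hX hνX => ?_⟩
  have hinter : Xν ∩ X ∈ 𝒞 :=
    ⟨hface.inter hX, hface.mem_convexHull_inter_union_singleton hμ hX hνXν hνX⟩
  rw [← hmin.eq_of_le hinter inter_subset_left]
  exact inter_subset_right
end

section
/- Let C be convex differentiable with bounded loss on Ω (C*(ω) < ∞ for all ω ∈ Ω). If q₀ is arbitrage-free for belief μ ∈ conv(Ω) (i.e., q₀ is optimal for the budget-constrained problem with B = 0), then ∇C(q₀) ∈ conv(Ω). -/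
/-!
If `∇C(q₀)` lay outside `conv(Ω)`, a hyperplane `⟪v, ·⟫ = u` would strictly separate it from
`conv(Ω)`. Trading a small amount `t • v` then costs `C(q₀ + t • v) - C(q₀) < t u` to first order,
while it pays `t ⟪v, ω⟫ > t u` in every outcome `ω` and `t ⟪v, μ⟫ > t u` in expectation: a trade
that never loses but has positive expected gain, contradicting arbitrage-freeness.
-/

open scoped RealInnerProductSpace

theorem exists_pos_sub_lt_mul_of_hasDerivAt {f : ℝ → ℝ} {f' u : ℝ} (hf : HasDerivAt f f' 0)
    (hu : f' < u) : ∃ t > 0, f t - f 0 < t * u := by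
  obtain ⟨t, hslope, ht⟩ :=
    ((hf.hasDerivWithinAt (s := Set.Ioi 0).limsup_slope_le' (lt_irrefl 0) hu).and
      self_mem_nhdsWithin).exists
  rw [slope_def_field, sub_zero, div_lt_iff₀ ht] at hslope
  exact ⟨t, ht, by linarith⟩

section InnerProductSpace

variable {E : Type*} [NormedAddCommGroup E] [InnerProductSpace ℝ E] [CompleteSpace E]

theorem exists_inner_lt_lt_inner_of_notMem_convexHull {s : Set E} (hs : s.Finite) {x : E}
    (hx : x ∉ convexHull ℝ s) :
    ∃ (v : E) (u : ℝ), ⟪v, x⟫ < u ∧ ∀ y ∈ convexHull ℝ s, u < ⟪v, y⟫ := by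
  obtain ⟨f, u, hfx, hfs⟩ := geometric_hahn_banach_point_closed (convex_convexHull ℝ s)
    (hs.isCompact_convexHull (𝕜 := ℝ)).isClosed hx
  have hf : ∀ y, f y = ⟪(InnerProductSpace.toDual ℝ E).symm f, y⟫ := fun y => by
    rw [InnerProductSpace.toDual_symm_apply (𝕜 := ℝ)]
  exact ⟨_, u, hf x ▸ hfx, fun y hy => hf y ▸ hfs y hy⟩

theorem HasGradientAt.exists_pos_sub_lt_mul {C : E → ℝ} {g q v : E} {u : ℝ}
    (hC : HasGradientAt C g q) (hu : ⟪g, v⟫ < u) :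
    ∃ t > 0, C (q + t • v) - C q < t * u := by
  have hline : HasDerivAt (fun t : ℝ => q + t • v) v 0 := by
    simpa using ((hasDerivAt_id (0 : ℝ)).smul_const v).const_add q
  have hC' : HasFDerivAt C (InnerProductSpace.toDual ℝ E g) (q + (0 : ℝ) • v) := by
    simpa using hC.hasFDerivAt
  have hderiv := hC'.comp_hasDerivAt (0 : ℝ) hline
  rw [InnerProductSpace.toDual_apply_apply] at hderiv
  simpa using exists_pos_sub_lt_mul_of_hasDerivAt hderiv hu

end InnerProductSpace

theorem arbitrage_free_price_in_hull_general (n : ℕ) (Ω : Finset (EuclideanSpace ℝ (Fin n)))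
    (C : EuclideanSpace ℝ (Fin n) → ℝ)
    (hdiff : Differentiable ℝ C)
    (μ : EuclideanSpace ℝ (Fin n))
    (hμ : μ ∈ convexHull ℝ (↑Ω : Set (EuclideanSpace ℝ (Fin n))))
    (q₀ : EuclideanSpace ℝ (Fin n))
    (harb : ∀ q : EuclideanSpace ℝ (Fin n),
      (∀ ω ∈ Ω, 0 ≤ ⟪q - q₀, ω⟫ - C q + C q₀) →
      ⟪q - q₀, μ⟫ - C q + C q₀ ≤ 0) :
    gradient C q₀ ∈ convexHull ℝ (↑Ω : Set (EuclideanSpace ℝ (Fin n))) := by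
  by_contra hnot
  obtain ⟨v, u, hgu, hsep⟩ := exists_inner_lt_lt_inner_of_notMem_convexHull Ω.finite_toSet hnot
  rw [real_inner_comm] at hgu
  obtain ⟨t, ht, hcost⟩ := (hdiff q₀).hasGradientAt.exists_pos_sub_lt_mul hgu
  have hpayoff : ∀ y, ⟪(q₀ + t • v) - q₀, y⟫ = t * ⟪v, y⟫ := fun y => by
    rw [add_sub_cancel_left, real_inner_smul_left]
  have hgain : ∀ y ∈ convexHull ℝ (↑Ω : Set (EuclideanSpace ℝ (Fin n))),
      0 < ⟪(q₀ + t • v) - q₀, y⟫ - C (q₀ + t • v) + C q₀ := fun y hy => by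
    rw [hpayoff]
    linarith [mul_lt_mul_of_pos_left (hsep y hy) ht]
  refine (harb (q₀ + t • v) fun ω hω => ?_).not_gt (hgain μ hμ)
  exact (hgain ω (subset_convexHull ℝ _ hω)).le

/-- If `q₀` is arbitrage-free for a belief `μ ∈ conv(Ω)` (a zero-budget trader cannot
gain expected utility), then the price vector `∇C(q₀)` lies in `conv(Ω)`. -/
theorem arbitrage_free_price_in_hull (n : ℕ) (Ω : Finset (EuclideanSpace ℝ (Fin n)))
    (C : EuclideanSpace ℝ (Fin n) → ℝ)
    (hconv : ConvexOn ℝ Set.univ C) (hdiff : Differentiable ℝ C)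
    (hfin : ∀ ω ∈ Ω, BddAbove {r : ℝ | ∃ p : EuclideanSpace ℝ (Fin n), r = ⟪p, ω⟫ - C p})
    (μ : EuclideanSpace ℝ (Fin n))
    (hμ : μ ∈ convexHull ℝ (↑Ω : Set (EuclideanSpace ℝ (Fin n))))
    (q₀ : EuclideanSpace ℝ (Fin n))
    (harb : ∀ q : EuclideanSpace ℝ (Fin n),
      (∀ ω ∈ Ω, 0 ≤ ⟪q - q₀, ω⟫ - C q + C q₀) →
      ⟪q - q₀, μ⟫ - C q + C q₀ ≤ 0) :
    gradient C q₀ ∈ convexHull ℝ (↑Ω : Set (EuclideanSpace ℝ (Fin n))) :=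
  arbitrage_free_price_in_hull_general n Ω C hdiff μ hμ q₀ harb
end

section
/- Let C be convex differentiable, q₀ ∈ ℝⁿ with ∇C(q₀) ∈ conv(Ω), and let q be an optimal solution to the budget-zero problem (maximize U(q,μ;q₀) subject to U(q,ω;q₀) ≥ 0 for all ω ∈ Ω). Then ∇C(q) = ∇C(q₀), and for any convex-combination weights c_ω ≥ 0 with Σ c_ω = 1 and Σ c_ω ω = ∇C(q₀), one has c_ω · U(q,ω;q₀) = 0 for every ω ∈ Ω. -/
/-!
Since `U(q, ν; q₀)` is affine in `ν`, feasibility on `Ω` extends to `conv(Ω)`, in particular to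
`ν = ∇C(q₀)`. But `U(q, ∇C(q₀); q₀)` is minus the Bregman divergence of `C` between `q` and `q₀`,
which is nonnegative by convexity. Hence it vanishes, so `q` minimizes `C - ⟪∇C(q₀), ·⟫` just as
`q₀` does, and `∇C(q) = ∇C(q₀)`. Averaging the nonnegative numbers `U(q, ω; q₀)` with weights `c_ω`
gives `U(q, ∇C(q₀); q₀) = 0`, so every term `c_ω U(q, ω; q₀)` vanishes.
-/

open scoped RealInnerProductSpace

section Convex

variable {E : Type*} [NormedAddCommGroup E] [NormedSpace ℝ E] {f : E → ℝ}

theorem ConvexOn.le_of_hasFDerivAt {f' : E →L[ℝ] ℝ} (hf : ConvexOn ℝ Set.univ f) {x : E}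
    (hx : HasFDerivAt f f' x) (y : E) : f x + f' (y - x) ≤ f y := by
  let ℓ : ℝ →ᵃ[ℝ] E := AffineMap.lineMap x y
  have hline : ConvexOn ℝ Set.univ (f ∘ ℓ) := hf.comp_affineMap ℓ
  have hderiv : HasDerivAt (f ∘ ℓ) (f' (y - x)) 0 := by
    rw [← AffineMap.lineMap_apply_zero (k := ℝ) x y] at hx
    exact hx.comp_hasDerivAt 0 AffineMap.hasDerivAt_lineMap
  have := hline.le_slope_of_hasDerivAt (Set.mem_univ 0) (Set.mem_univ 1) zero_lt_one hderiv
  simp only [ℓ, slope_def_field, Function.comp_apply, AffineMap.lineMap_apply_one,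
    AffineMap.lineMap_apply_zero, sub_zero, div_one] at this
  linarith

end Convex

section Gradient

variable {E : Type*} [NormedAddCommGroup E] [InnerProductSpace ℝ E] [CompleteSpace E] {f : E → ℝ}

theorem ConvexOn.le_add_inner_gradient (hf : ConvexOn ℝ Set.univ f) {x : E}
    (hx : DifferentiableAt ℝ f x) (y : E) : f x + ⟪gradient f x, y - x⟫ ≤ f y := by
  simpa using hf.le_of_hasFDerivAt hx.hasGradientAt.hasFDerivAt y

theorem gradient_eq_of_isMinOn_sub_inner {g x : E} (hx : DifferentiableAt ℝ f x)
    (hmin : IsMinOn (fun z => f z - ⟪g, z⟫) Set.univ x) : gradient f x = g := by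
  have hderiv : HasFDerivAt (fun z => f z - ⟪g, z⟫)
      (fderiv ℝ f x - InnerProductSpace.toDual ℝ E g) x :=
    hx.hasFDerivAt.sub (InnerProductSpace.toDual ℝ E g).hasFDerivAt
  have hcrit := (hmin.isLocalMin Filter.univ_mem).hasFDerivAt_eq_zero hderiv
  rw [sub_eq_zero] at hcrit
  simp [gradient, hcrit]

/-- The Bregman divergence in gradient form. For `ν = ∇f q` it agrees with the conjugate form
`f p + f* ν - ⟪p, ν⟫`, by the Fenchel–Young equality `f q + f* (∇f q) = ⟪q, ∇f q⟫`. -/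
noncomputable def bregmanDiv (f : E → ℝ) (p q : E) : ℝ := f p - f q - ⟪gradient f q, p - q⟫

theorem bregmanDiv_nonneg (hf : ConvexOn ℝ Set.univ f) {q : E} (hq : DifferentiableAt ℝ f q)
    (p : E) : 0 ≤ bregmanDiv f p q := by
  have := hf.le_add_inner_gradient hq p
  unfold bregmanDiv
  linarith

theorem gradient_eq_of_bregmanDiv_eq_zero (hf : ConvexOn ℝ Set.univ f)
    (hdiff : Differentiable ℝ f) {p q : E} (hpq : bregmanDiv f p q = 0) :
    gradient f p = gradient f q := by
  refine gradient_eq_of_isMinOn_sub_inner (hdiff p) (isMinOn_univ_iff.mpr fun z => ?_)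
  have hz := bregmanDiv_nonneg hf (hdiff q) z
  simp only [bregmanDiv, inner_sub_right] at hz hpq
  linarith

end Gradient

section TradeProfit

variable {E : Type*} [NormedAddCommGroup E] [InnerProductSpace ℝ E]

/-- The paper's `U(q, ν; q₀)`. -/
def tradeProfit (C : E → ℝ) (q₀ q ν : E) : ℝ := ⟪q - q₀, ν⟫ - C q + C q₀

variable (C : E → ℝ) (q₀ q : E)

theorem tradeProfit_gradient [CompleteSpace E] :
    tradeProfit C q₀ q (gradient C q₀) = -bregmanDiv C q q₀ := by
  simp only [tradeProfit, bregmanDiv, real_inner_comm]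
  ring

theorem tradeProfit_nonneg_of_mem_convexHull {s : Set E}
    (hs : ∀ ω ∈ s, 0 ≤ tradeProfit C q₀ q ω) {ν : E} (hν : ν ∈ convexHull ℝ s) :
    0 ≤ tradeProfit C q₀ q ν := by
  have hconvex : Convex ℝ {ν | 0 ≤ tradeProfit C q₀ q ν} := by
    simpa only [tradeProfit, sub_add, sub_nonneg, innerₛₗ_apply_apply] using
      convex_halfSpace_ge (innerₛₗ ℝ (q - q₀)).isLinear (C q - C q₀)
  exact convexHull_min hs hconvex hν

theorem sum_mul_tradeProfit {s : Finset E} {c : E → ℝ} (hc : ∑ ω ∈ s, c ω = 1) :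
    ∑ ω ∈ s, c ω * tradeProfit C q₀ q ω = tradeProfit C q₀ q (∑ ω ∈ s, c ω • ω) := by
  simp only [tradeProfit, mul_add, mul_sub, Finset.sum_add_distrib, Finset.sum_sub_distrib,
    ← Finset.sum_mul, hc, inner_sum, real_inner_smul_right, one_mul]

end TradeProfit

theorem budget_zero_solution_general (n : ℕ) (Ω : Finset (EuclideanSpace ℝ (Fin n)))
    (C : EuclideanSpace ℝ (Fin n) → ℝ)
    (hconv : ConvexOn ℝ Set.univ C) (hdiff : Differentiable ℝ C)
    (q₀ : EuclideanSpace ℝ (Fin n))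
    (hq₀ : gradient C q₀ ∈ convexHull ℝ (↑Ω : Set (EuclideanSpace ℝ (Fin n))))
    (q : EuclideanSpace ℝ (Fin n))
    (hqfeas : ∀ ω ∈ Ω, 0 ≤ ⟪q - q₀, ω⟫ - C q + C q₀) :
    gradient C q = gradient C q₀ ∧
    ∀ c : EuclideanSpace ℝ (Fin n) → ℝ,
      (∀ ω ∈ Ω, 0 ≤ c ω) → (∑ ω ∈ Ω, c ω) = 1 →
      (∑ ω ∈ Ω, c ω • ω) = gradient C q₀ →
      ∀ ω ∈ Ω, c ω * (⟪q - q₀, ω⟫ - C q + C q₀) = 0 := by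
  have hprofit : 0 ≤ tradeProfit C q₀ q (gradient C q₀) :=
    tradeProfit_nonneg_of_mem_convexHull C q₀ q hqfeas hq₀
  have hbregman : bregmanDiv C q q₀ = 0 := by
    have := bregmanDiv_nonneg hconv (hdiff q₀) q
    rw [tradeProfit_gradient] at hprofit
    linarith
  refine ⟨gradient_eq_of_bregmanDiv_eq_zero hconv hdiff hbregman, fun c hc0 hc1 hcω => ?_⟩
  have hsum : ∑ ω ∈ Ω, c ω * tradeProfit C q₀ q ω = 0 := by
    rw [sum_mul_tradeProfit C q₀ q hc1, hcω, tradeProfit_gradient, hbregman, neg_zero]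
  exact (Finset.sum_eq_zero_iff_of_nonneg fun ω hω => mul_nonneg (hc0 ω hω) (hqfeas ω hω)).mp hsum

/-- If `∇C(q₀) ∈ conv(Ω)` and `q` optimally solves the budget-zero problem, then
`∇C(q) = ∇C(q₀)` and for any convex decomposition `∇C(q₀) = Σ c_ω ω` over `Ω`,
one has `c_ω · U(q,ω;q₀) = 0` for every `ω ∈ Ω`. -/
theorem budget_zero_solution (n : ℕ) (Ω : Finset (EuclideanSpace ℝ (Fin n)))
    (C : EuclideanSpace ℝ (Fin n) → ℝ)
    (hconv : ConvexOn ℝ Set.univ C) (hdiff : Differentiable ℝ C)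
    (hfin : ∀ ν ∈ convexHull ℝ (↑Ω : Set (EuclideanSpace ℝ (Fin n))),
      BddAbove {r : ℝ | ∃ p : EuclideanSpace ℝ (Fin n), r = ⟪p, ν⟫ - C p})
    (μ : EuclideanSpace ℝ (Fin n))
    (hμ : μ ∈ convexHull ℝ (↑Ω : Set (EuclideanSpace ℝ (Fin n))))
    (q₀ : EuclideanSpace ℝ (Fin n))
    (hq₀ : gradient C q₀ ∈ convexHull ℝ (↑Ω : Set (EuclideanSpace ℝ (Fin n))))
    (q : EuclideanSpace ℝ (Fin n))
    (hqfeas : ∀ ω ∈ Ω, 0 ≤ ⟪q - q₀, ω⟫ - C q + C q₀)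
    (hqopt : ∀ r : EuclideanSpace ℝ (Fin n),
      (∀ ω ∈ Ω, 0 ≤ ⟪r - q₀, ω⟫ - C r + C q₀) →
      ⟪r - q₀, μ⟫ - C r + C q₀ ≤ ⟪q - q₀, μ⟫ - C q + C q₀) :
    gradient C q = gradient C q₀ ∧
    ∀ c : EuclideanSpace ℝ (Fin n) → ℝ,
      (∀ ω ∈ Ω, 0 ≤ c ω) → (∑ ω ∈ Ω, c ω) = 1 →
      (∑ ω ∈ Ω, c ω • ω) = gradient C q₀ →
      ∀ ω ∈ Ω, c ω * (⟪q - q₀, ω⟫ - C q + C q₀) = 0 :=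
  budget_zero_solution_general n Ω C hconv hdiff q₀ hq₀ q hqfeas
end

section
/- If C is strictly convex and differentiable with ∇C(q₀) ∈ conv(Ω), then q₀ is arbitrage-free: any q satisfying U(q,ω;q₀) ≥ 0 for all ω ∈ Ω also satisfies U(q,μ;q₀) ≤ 0 for all μ ∈ conv(Ω), with the unique optimizer being q₀ itself. -/
/-!
The utility `ν ↦ U(q, ν; q₀)` is affine, so nonnegativity on `Ω` persists on `conv(Ω)`, in
particular at `ν = ∇C(q₀)`. There `U(q, ∇C(q₀); q₀) = C(q₀) + ⟪∇C(q₀), q - q₀⟫ - C(q)`, which is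
negative for `q ≠ q₀` by the strict first-order condition of a strictly convex function. Hence
`q₀` is the only feasible trade, and its utility vanishes identically.
-/

open scoped RealInnerProductSpace

open Set

theorem StrictConvexOn.comp_affineMap {𝕜 E F β : Type*} [Field 𝕜] [LinearOrder 𝕜]
    [AddCommGroup E] [AddCommGroup F] [AddCommMonoid β] [PartialOrder β]
    [Module 𝕜 E] [Module 𝕜 F] [SMul 𝕜 β] {f : F → β} {s : Set F}
    (g : E →ᵃ[𝕜] F) (hg : Function.Injective g) (hf : StrictConvexOn 𝕜 s f) :
    StrictConvexOn 𝕜 (g ⁻¹' s) (f ∘ g) :=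
  ⟨hf.1.affine_preimage g, fun x hx y hy hxy a b ha hb hab =>
    calc
      (f ∘ g) (a • x + b • y) = f (a • g x + b • g y) := by
        rw [Function.comp_apply, Convex.combo_affine_apply hab]
      _ < a • f (g x) + b • f (g y) := hf.2 hx hy (hg.ne hxy) ha hb hab⟩

theorem StrictConvexOn.add_fderiv_lt {E : Type*} [NormedAddCommGroup E] [NormedSpace ℝ E]
    {f : E → ℝ} {f' : E →L[ℝ] ℝ} {s : Set E} {x y : E} (hf : StrictConvexOn ℝ s f)
    (hx : x ∈ s) (hy : y ∈ s) (hxy : x ≠ y) (hf' : HasFDerivAt f f' x) :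
    f x + f' (y - x) < f y := by
  have hline :
      StrictConvexOn ℝ (AffineMap.lineMap (k := ℝ) x y ⁻¹' s) (f ∘ AffineMap.lineMap x y) :=
    hf.comp_affineMap _ (AffineMap.lineMap_injective ℝ hxy)
  have hderiv : HasDerivAt (f ∘ AffineMap.lineMap (k := ℝ) x y) (f' (y - x)) 0 := by
    refine HasFDerivAt.comp_hasDerivAt _ ?_ AffineMap.hasDerivAt_lineMap
    rwa [AffineMap.lineMap_apply_zero]
  have hslope := hline.lt_slope_of_hasDerivAt (x := 0) (y := 1)
    (by simpa using hx) (by simpa using hy) one_pos hderiv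
  simp only [slope_def_field, Function.comp_apply, AffineMap.lineMap_apply_zero,
    AffineMap.lineMap_apply_one, sub_zero, div_one] at hslope
  linarith

theorem le_inner_of_mem_convexHull {E : Type*} [NormedAddCommGroup E] [InnerProductSpace ℝ E]
    {s : Set E} {v μ : E} {c : ℝ} (h : ∀ ω ∈ s, c ≤ ⟪v, ω⟫) (hμ : μ ∈ convexHull ℝ s) :
    c ≤ ⟪v, μ⟫ :=
  convexHull_min h (convex_halfSpace_ge (innerₛₗ ℝ v).isLinear c) hμ

theorem eq_of_forall_utility_nonneg {E : Type*} [NormedAddCommGroup E] [InnerProductSpace ℝ E]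
    [CompleteSpace E] {s : Set E} {C : E → ℝ} {g q q₀ : E} (hC : StrictConvexOn ℝ univ C)
    (hg : HasGradientAt C g q₀) (hgs : g ∈ convexHull ℝ s)
    (hq : ∀ ω ∈ s, 0 ≤ ⟪q - q₀, ω⟫ - C q + C q₀) : q = q₀ := by
  by_contra hne
  have hfeasible : C q - C q₀ ≤ ⟪q - q₀, g⟫ :=
    le_inner_of_mem_convexHull (fun ω hω => by linarith [hq ω hω]) hgs
  have htangent : C q₀ + ⟪g, q - q₀⟫ < C q := by
    simpa using hC.add_fderiv_lt (mem_univ _) (mem_univ _) (Ne.symm hne) hg.hasFDerivAt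
  rw [real_inner_comm] at hfeasible
  linarith

theorem strictly_convex_arbitrage_free_general (n : ℕ) (Ω : Finset (EuclideanSpace ℝ (Fin n)))
    (C : EuclideanSpace ℝ (Fin n) → ℝ)
    (hconv : StrictConvexOn ℝ Set.univ C) (hdiff : Differentiable ℝ C)
    (q₀ : EuclideanSpace ℝ (Fin n))
    (hq₀ : gradient C q₀ ∈ convexHull ℝ (↑Ω : Set (EuclideanSpace ℝ (Fin n)))) :
    (∀ q : EuclideanSpace ℝ (Fin n),
      (∀ ω ∈ Ω, 0 ≤ ⟪q - q₀, ω⟫ - C q + C q₀) →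
      ∀ μ ∈ convexHull ℝ (↑Ω : Set (EuclideanSpace ℝ (Fin n))),
        ⟪q - q₀, μ⟫ - C q + C q₀ ≤ 0) ∧
    (∀ μ ∈ convexHull ℝ (↑Ω : Set (EuclideanSpace ℝ (Fin n))),
      ∀ q : EuclideanSpace ℝ (Fin n),
        (∀ ω ∈ Ω, 0 ≤ ⟪q - q₀, ω⟫ - C q + C q₀) →
        ⟪q - q₀, μ⟫ - C q + C q₀ = 0 → q = q₀) := by
  have hfeasible_eq : ∀ q, (∀ ω ∈ Ω, 0 ≤ ⟪q - q₀, ω⟫ - C q + C q₀) → q = q₀ := fun _ hq =>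
    eq_of_forall_utility_nonneg hconv (hdiff q₀).hasGradientAt hq₀ hq
  refine ⟨fun q hq μ _ => ?_, fun _ _ q hq _ => hfeasible_eq q hq⟩
  obtain rfl := hfeasible_eq q hq
  simp

/-- If `C` is strictly convex and differentiable with `∇C(q₀) ∈ conv(Ω)`, then `q₀` is
arbitrage-free: any feasible `q` (nonnegative utility on every outcome) yields
nonpositive expected utility for every belief `μ ∈ conv(Ω)`, and the unique optimizer
is `q₀` itself. -/
theorem strictly_convex_arbitrage_free (n : ℕ) (Ω : Finset (EuclideanSpace ℝ (Fin n)))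
    (C : EuclideanSpace ℝ (Fin n) → ℝ)
    (hconv : StrictConvexOn ℝ Set.univ C) (hdiff : Differentiable ℝ C)
    (hfin : ∀ ν ∈ convexHull ℝ (↑Ω : Set (EuclideanSpace ℝ (Fin n))),
      BddAbove {r : ℝ | ∃ p : EuclideanSpace ℝ (Fin n), r = ⟪p, ν⟫ - C p})
    (q₀ : EuclideanSpace ℝ (Fin n))
    (hq₀ : gradient C q₀ ∈ convexHull ℝ (↑Ω : Set (EuclideanSpace ℝ (Fin n)))) :
    (∀ q : EuclideanSpace ℝ (Fin n),
      (∀ ω ∈ Ω, 0 ≤ ⟪q - q₀, ω⟫ - C q + C q₀) →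
      ∀ μ ∈ convexHull ℝ (↑Ω : Set (EuclideanSpace ℝ (Fin n))),
        ⟪q - q₀, μ⟫ - C q + C q₀ ≤ 0) ∧
    (∀ μ ∈ convexHull ℝ (↑Ω : Set (EuclideanSpace ℝ (Fin n))),
      ∀ q : EuclideanSpace ℝ (Fin n),
        (∀ ω ∈ Ω, 0 ≤ ⟪q - q₀, ω⟫ - C q + C q₀) →
        ⟪q - q₀, μ⟫ - C q + C q₀ = 0 → q = q₀) :=
  strictly_convex_arbitrage_free_general n Ω C hconv hdiff q₀ hq₀
end

section
/- If ∇C(q₀) lies in the relative interior of conv(Ω), then q₀ is arbitrage-free: any q with U(q,ω;q₀) ≥ 0 for all ω ∈ Ω satisfies U(q,ω;q₀) = 0 for all ω ∈ Ω, and hence U(q,μ;q₀) = 0 for all μ ∈ conv(Ω). -/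
open scoped RealInnerProductSpace Topology

/-!
The payoff `μ ↦ U(q, μ; q₀)` is affine, so its nonnegativity on `Ω` extends to `conv(Ω)`.
Convexity of `C` gives `⟪∇C(q₀), q - q₀⟫ ≤ C q - C q₀`, i.e. `U(q, ∇C(q₀); q₀) ≤ 0`, so the
payoff vanishes at the relative interior point `∇C(q₀)`. An affine function that is nonnegative
on a set and vanishes at a relative interior point vanishes on the whole set: the segment from any
point `y` of the set, prolonged slightly beyond that interior point, ends in the set at a point
where the function has the opposite sign to its value at `y`.
-/

section FirstOrderConvexity

variable {E : Type*} [NormedAddCommGroup E] [NormedSpace ℝ E] {s : Set E} {f : E → ℝ}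
  {f' : E →L[ℝ] ℝ} {x y : E}

theorem ConvexOn.apply_sub_le_sub_of_hasFDerivAt (hf : ConvexOn ℝ s f) (hx : x ∈ s)
    (hy : y ∈ s) (hf' : HasFDerivAt f f' x) : f' (y - x) ≤ f y - f x := by
  let ℓ : ℝ →ᵃ[ℝ] E := AffineMap.lineMap x y
  have hfℓ : HasDerivAt (f ∘ ℓ) (f' (y - x)) 0 := by
    refine HasFDerivAt.comp_hasDerivAt (0 : ℝ) ?_ AffineMap.hasDerivAt_lineMap
    simpa [ℓ] using hf'
  have hslope := (hf.comp_affineMap ℓ).le_slope_of_hasDerivAt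
    (by simpa [ℓ] using hx) (by simpa [ℓ] using hy) one_pos hfℓ
  simpa [ℓ, slope_def_field] using hslope

end FirstOrderConvexity

theorem ConvexOn.inner_sub_le_sub_of_hasGradientAt {F : Type*} [NormedAddCommGroup F]
    [InnerProductSpace ℝ F] [CompleteSpace F] {s : Set F} {f : F → ℝ} {g x y : F}
    (hf : ConvexOn ℝ s f) (hx : x ∈ s) (hy : y ∈ s) (hg : HasGradientAt f g x) :
    ⟪g, y - x⟫ ≤ f y - f x :=
  hf.apply_sub_le_sub_of_hasFDerivAt hx hy hg.hasFDerivAt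

section IntrinsicInterior

variable {E : Type*} [AddCommGroup E] [Module ℝ E] [TopologicalSpace E]
  [IsTopologicalAddGroup E] [ContinuousSMul ℝ E] {s : Set E} {x y : E}

theorem exists_one_lt_lineMap_mem_of_mem_intrinsicInterior (hx : x ∈ intrinsicInterior ℝ s)
    (hy : y ∈ affineSpan ℝ s) : ∃ t : ℝ, 1 < t ∧ AffineMap.lineMap y x t ∈ s := by
  obtain ⟨x', hx'_int, rfl⟩ := hx
  let ψ : ℝ → affineSpan ℝ s := fun t =>
    ⟨AffineMap.lineMap y x' t, AffineMap.lineMap_mem t hy x'.2⟩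
  have hψ : Continuous ψ := AffineMap.lineMap_continuous.subtype_mk _
  have hψ_one : ψ 1 = x' := Subtype.ext (AffineMap.lineMap_apply_one _ _)
  have hnhds : ∀ᶠ t in 𝓝[>] (1 : ℝ), ψ t ∈ interior ((↑) ⁻¹' s) :=
    nhdsWithin_le_nhds <| hψ.continuousAt.preimage_mem_nhds <|
      hψ_one ▸ isOpen_interior.mem_nhds hx'_int
  obtain ⟨t, ht_int, ht⟩ := (hnhds.and self_mem_nhdsWithin).exists
  exact ⟨t, ht, interior_subset (s := ((↑) : affineSpan ℝ s → E) ⁻¹' s) ht_int⟩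

theorem AffineMap.eq_zero_of_nonneg_of_mem_intrinsicInterior (f : E →ᵃ[ℝ] ℝ)
    (hf : ∀ y ∈ s, 0 ≤ f y) (hx : x ∈ intrinsicInterior ℝ s) (hfx : f x = 0) :
    ∀ y ∈ s, f y = 0 := by
  intro y hy
  obtain ⟨t, ht, hz⟩ :=
    exists_one_lt_lineMap_mem_of_mem_intrinsicInterior hx (subset_affineSpan ℝ s hy)
  have hfz : f (AffineMap.lineMap y x t) = (1 - t) * f y := by
    rw [AffineMap.apply_lineMap, AffineMap.lineMap_apply_ring, hfx]
    ring
  have hz_nonneg := hfz ▸ hf _ hz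
  have hy_nonneg := hf y hy
  nlinarith

end IntrinsicInterior

theorem AffineMap.nonneg_on_convexHull {E : Type*} [AddCommGroup E] [Module ℝ E] {s : Set E}
    (f : E →ᵃ[ℝ] ℝ) (hf : ∀ y ∈ s, 0 ≤ f y) : ∀ y ∈ convexHull ℝ s, 0 ≤ f y :=
  convexHull_min hf ((convex_Ici 0).affine_preimage f)

section Payoff

variable {F : Type*} [NormedAddCommGroup F] [InnerProductSpace ℝ F]

/-- `U(q, ·; q₀)` as an affine function of the outcome. -/
noncomputable def payoff (C : F → ℝ) (q₀ q : F) : F →ᵃ[ℝ] ℝ where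
  toFun μ := ⟪q - q₀, μ⟫ - C q + C q₀
  linear := innerₛₗ ℝ (q - q₀)
  map_vadd' μ ν := by
    simp only [vadd_eq_add, innerₛₗ_apply_apply, inner_add_right]
    ring

theorem payoff_apply (C : F → ℝ) (q₀ q μ : F) : payoff C q₀ q μ = ⟪q - q₀, μ⟫ - C q + C q₀ :=
  rfl

end Payoff

theorem relative_interior_arbitrage_free_general (n : ℕ) (Ω : Finset (EuclideanSpace ℝ (Fin n)))
    (C : EuclideanSpace ℝ (Fin n) → ℝ)
    (hconv : ConvexOn ℝ Set.univ C) (hdiff : Differentiable ℝ C)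
    (q₀ : EuclideanSpace ℝ (Fin n))
    (hq₀ : gradient C q₀ ∈
      intrinsicInterior ℝ (convexHull ℝ (↑Ω : Set (EuclideanSpace ℝ (Fin n))))) :
    ∀ q : EuclideanSpace ℝ (Fin n),
      (∀ ω ∈ Ω, 0 ≤ ⟪q - q₀, ω⟫ - C q + C q₀) →
      (∀ ω ∈ Ω, ⟪q - q₀, ω⟫ - C q + C q₀ = 0) ∧
      (∀ μ ∈ convexHull ℝ (↑Ω : Set (EuclideanSpace ℝ (Fin n))),
        ⟪q - q₀, μ⟫ - C q + C q₀ = 0) := by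
  intro q hq
  have hU_hull := (payoff C q₀ q).nonneg_on_convexHull hq
  have hU_grad : payoff C q₀ q (gradient C q₀) = 0 := by
    refine le_antisymm ?_ (hU_hull _ (intrinsicInterior_subset hq₀))
    have hgrad := hconv.inner_sub_le_sub_of_hasGradientAt (Set.mem_univ q₀) (Set.mem_univ q)
      (hdiff q₀).hasGradientAt
    rw [payoff_apply, real_inner_comm]
    linarith
  have hU_zero := (payoff C q₀ q).eq_zero_of_nonneg_of_mem_intrinsicInterior hU_hull hq₀ hU_grad
  exact ⟨fun ω hω => hU_zero ω (subset_convexHull ℝ _ hω), hU_zero⟩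

/-- If `∇C(q₀)` lies in the relative interior of `conv(Ω)`, then `q₀` is arbitrage-free:
any `q` with `U(q,ω;q₀) ≥ 0` for all outcomes has `U(q,ω;q₀) = 0` for all outcomes,
hence `U(q,μ;q₀) = 0` for all `μ ∈ conv(Ω)`. -/
theorem relative_interior_arbitrage_free (n : ℕ) (Ω : Finset (EuclideanSpace ℝ (Fin n)))
    (C : EuclideanSpace ℝ (Fin n) → ℝ)
    (hconv : ConvexOn ℝ Set.univ C) (hdiff : Differentiable ℝ C)
    (hfin : ∀ ν ∈ convexHull ℝ (↑Ω : Set (EuclideanSpace ℝ (Fin n))),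
      BddAbove {r : ℝ | ∃ p : EuclideanSpace ℝ (Fin n), r = ⟪p, ν⟫ - C p})
    (q₀ : EuclideanSpace ℝ (Fin n))
    (hq₀ : gradient C q₀ ∈
      intrinsicInterior ℝ (convexHull ℝ (↑Ω : Set (EuclideanSpace ℝ (Fin n))))) :
    ∀ q : EuclideanSpace ℝ (Fin n),
      (∀ ω ∈ Ω, 0 ≤ ⟪q - q₀, ω⟫ - C q + C q₀) →
      (∀ ω ∈ Ω, ⟪q - q₀, ω⟫ - C q + C q₀ = 0) ∧
      (∀ μ ∈ convexHull ℝ (↑Ω : Set (EuclideanSpace ℝ (Fin n))),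
        ⟪q - q₀, μ⟫ - C q + C q₀ = 0) :=
  relative_interior_arbitrage_free_general n Ω C hconv hdiff q₀ hq₀
end

section
/- For the hypercube outcome set Ω = {0,1}ⁿ and the quadratic cost (Euclidean geometry), the Euclidean acute angles property holds for every face X of conv(Ω): for every point ν̄ ∈ conv(Ω), letting a be the orthogonal projection of ν̄ onto aff(X), one has (ν̄ − a)·(ω − a) ≥ 0 for all ω ∈ Ω (equivalently (ν̄−a)·(ω−x) ≥ 0 for all x ∈ X, ω ∈ Ω). -/
/-!
The face of `{0,1}ⁿ` maximizing `⟪u, ·⟫` consists of the vertices `ω` with `ω i = cᵢ` on the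
fixed coordinates `u i ≠ 0` (where `cᵢ = 1` if `u i > 0` and `0` otherwise), and arbitrary free
coordinates. So `a` agrees with `c` on the fixed coordinates, while orthogonality of `ν̄ - a` to the
edge directions `eⱼ` of the face forces `ν̄ⱼ = aⱼ` on the free ones. The inner product then splits
into the terms `(ν̄ᵢ - cᵢ)(ωᵢ - cᵢ)`, nonnegative because `ν̄ᵢ, ωᵢ ∈ [0,1]` lie on the same side of
the endpoint `cᵢ`.
-/

open scoped RealInnerProductSpace

variable {ι : Type*}

lemma EuclideanSpace.real_inner_eq_sum [Fintype ι] (x y : EuclideanSpace ℝ ι) :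
    ⟪x, y⟫ = ∑ i, x i * y i := by
  simp [PiLp.inner_apply, mul_comm]

def hypercube (ι : Type*) : Set (EuclideanSpace ℝ ι) := {x | ∀ i, x i = 0 ∨ x i = 1}

/-- A vertex maximizing `⟪u, ·⟫` on the hypercube. Its free coordinates (`u i = 0`) are `0`, so
that adding `EuclideanSpace.single j 1` for a free `j` stays in the face. -/
noncomputable def topVertex (u : EuclideanSpace ℝ ι) : EuclideanSpace ℝ ι :=
  WithLp.toLp 2 fun i => if 0 < u i then 1 else 0

lemma topVertex_mem_hypercube (u : EuclideanSpace ℝ ι) : topVertex u ∈ hypercube ι := by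
  intro i
  by_cases h : 0 < u i <;> simp [topVertex, h]

lemma topVertex_apply_of_eq_zero {u : EuclideanSpace ℝ ι} {i : ι} (h : u i = 0) :
    topVertex u i = 0 := by
  simp [topVertex, h]

lemma mul_le_mul_topVertex (u : EuclideanSpace ℝ ι) {ω : EuclideanSpace ℝ ι}
    (hω : ω ∈ hypercube ι) (i : ι) : u i * ω i ≤ u i * topVertex u i := by
  by_cases h : 0 < u i <;> rcases hω i with hi | hi <;> simp [topVertex, h, hi] <;> linarith

def hypercubeFace (u : EuclideanSpace ℝ ι) : Set (EuclideanSpace ℝ ι) :=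
  {ω ∈ hypercube ι | ∀ i, u i ≠ 0 → ω i = topVertex u i}

lemma setOf_isMaxOn_inner_hypercube_eq [Fintype ι] (u : EuclideanSpace ℝ ι) :
    {ω ∈ hypercube ι | ∀ ω' ∈ hypercube ι, ⟪u, ω'⟫ ≤ ⟪u, ω⟫} = hypercubeFace u := by
  ext ω
  refine and_congr_right fun hω => ?_
  have hle := fun i (_ : i ∈ Finset.univ) => mul_le_mul_topVertex u hω i
  have hcancel : (∀ i, u i * ω i = u i * topVertex u i) ↔ ∀ i, u i ≠ 0 → ω i = topVertex u i := by
    simp only [mul_eq_mul_left_iff, or_iff_not_imp_right]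
  simp only [← hcancel, EuclideanSpace.real_inner_eq_sum]
  constructor
  · intro hmax i
    refine (Finset.sum_eq_sum_iff_of_le hle).1 ?_ i (Finset.mem_univ i)
    exact (Finset.sum_le_sum hle).antisymm (hmax _ (topVertex_mem_hypercube u))
  · intro heq ω' hω'
    simp only [heq]
    exact Finset.sum_le_sum fun i _ => mul_le_mul_topVertex u hω' i

lemma apply_eq_of_mem_affineSpan {s : Set (EuclideanSpace ℝ ι)} {i : ι} {r : ℝ}
    (hs : ∀ x ∈ s, x i = r) {a : EuclideanSpace ℝ ι} (ha : a ∈ affineSpan ℝ s) : a i = r :=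
  AffineMap.eqOn_affineSpan
    (f := (EuclideanSpace.proj i : EuclideanSpace ℝ ι →L[ℝ] ℝ).toLinearMap.toAffineMap)
    (g := AffineMap.const ℝ _ r) hs ha

lemma apply_eq_topVertex_of_mem_affineSpan {u a : EuclideanSpace ℝ ι}
    (ha : a ∈ affineSpan ℝ (hypercubeFace u)) {i : ι} (hi : u i ≠ 0) : a i = topVertex u i :=
  apply_eq_of_mem_affineSpan (fun _ hx => hx.2 i hi) ha

lemma topVertex_add_single_mem_hypercubeFace [DecidableEq ι] {u : EuclideanSpace ℝ ι} {j : ι}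
    (hj : u j = 0) : topVertex u + EuclideanSpace.single j 1 ∈ hypercubeFace u := by
  refine ⟨fun i => ?_, fun i hi => ?_⟩
  · by_cases h : i = j
    · subst h; simp [topVertex_apply_of_eq_zero hj]
    · simpa [h] using topVertex_mem_hypercube u i
  · have hij : i ≠ j := by rintro rfl; exact hi hj
    simp [hij]

lemma apply_eq_zero_of_forall_inner_sub_eq_zero [Fintype ι] [DecidableEq ι]
    {u v a : EuclideanSpace ℝ ι} (h : ∀ x ∈ hypercubeFace u, ⟪v, x - a⟫ = 0) {j : ι}
    (hj : u j = 0) : v j = 0 := by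
  have h₀ := h _ ⟨topVertex_mem_hypercube u, fun _ _ => rfl⟩
  have h₁ := h _ (topVertex_add_single_mem_hypercubeFace hj)
  rw [add_sub_right_comm, inner_add_right, h₀, zero_add,
    EuclideanSpace.inner_single_right] at h₁
  simpa using h₁

lemma mem_Icc_of_mem_convexHull_hypercube {x : EuclideanSpace ℝ ι}
    (hx : x ∈ convexHull ℝ (hypercube ι)) (i : ι) : x i ∈ Set.Icc 0 1 := by
  let proj : EuclideanSpace ℝ ι →ₗ[ℝ] ℝ := (EuclideanSpace.proj i : EuclideanSpace ℝ ι →L[ℝ] ℝ)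
  refine convexHull_min (t := proj ⁻¹' Set.Icc 0 1) (fun y hy => ?_)
    ((convex_Icc 0 1).linear_preimage _) hx
  rcases hy i with h | h <;> simp [proj, h]

lemma sub_mul_sub_nonneg_of_mem_Icc {x y c : ℝ} (hc : c = 0 ∨ c = 1) (hx : x ∈ Set.Icc 0 1)
    (hy : y ∈ Set.Icc 0 1) : 0 ≤ (x - c) * (y - c) := by
  rcases hc with rfl | rfl
  · exact mul_nonneg (by linarith [hx.1]) (by linarith [hy.1])
  · exact mul_nonneg_of_nonpos_of_nonpos (by linarith [hx.2]) (by linarith [hy.2])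

theorem hypercube_euclidean_acute_angles_general (n : ℕ)
    (Ω : Set (EuclideanSpace ℝ (Fin n)))
    (hΩ : Ω = {x : EuclideanSpace ℝ (Fin n) | ∀ i, x i = 0 ∨ x i = 1})
    (X : Set (EuclideanSpace ℝ (Fin n)))
    (hface : ∃ u : EuclideanSpace ℝ (Fin n),
      X = {ω ∈ Ω | ∀ ω' ∈ Ω, ⟪u, ω'⟫ ≤ ⟪u, ω⟫})
    (νbar : EuclideanSpace ℝ (Fin n)) (hν : νbar ∈ convexHull ℝ Ω)
    (a : EuclideanSpace ℝ (Fin n))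
    (haX : a ∈ affineSpan ℝ X)
    (hproj : ∀ x ∈ affineSpan ℝ X, ⟪νbar - a, x - a⟫ = 0) :
    ∀ ω ∈ Ω, 0 ≤ ⟪νbar - a, ω - a⟫ := by
  replace hΩ : Ω = hypercube (Fin n) := hΩ
  subst hΩ
  obtain ⟨u, rfl⟩ := hface
  rw [setOf_isMaxOn_inner_hypercube_eq] at haX hproj
  have hfree : ∀ i, u i = 0 → (νbar - a) i = 0 := fun i hi =>
    apply_eq_zero_of_forall_inner_sub_eq_zero (fun x hx => hproj x (subset_affineSpan ℝ _ hx)) hi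
  intro ω hω
  rw [EuclideanSpace.real_inner_eq_sum]
  refine Finset.sum_nonneg fun i _ => ?_
  by_cases hi : u i = 0
  · simp [hfree i hi]
  · rw [PiLp.sub_apply, PiLp.sub_apply, apply_eq_topVertex_of_mem_affineSpan haX hi]
    exact sub_mul_sub_nonneg_of_mem_Icc (topVertex_mem_hypercube u i)
      (mem_Icc_of_mem_convexHull_hypercube hν i)
      (mem_Icc_of_mem_convexHull_hypercube (subset_convexHull ℝ _ hω) i)

/-- Euclidean acute angles for the hypercube `Ω = {0,1}ⁿ`: for every (nonempty) face
`X` of `conv(Ω)`, every `ν̄ ∈ conv(Ω)` and its orthogonal projection `a` onto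
`aff(X)`, one has `⟪ν̄ − a, ω − a⟫ ≥ 0` for all `ω ∈ Ω`. -/
theorem hypercube_euclidean_acute_angles (n : ℕ)
    (Ω : Set (EuclideanSpace ℝ (Fin n)))
    (hΩ : Ω = {x : EuclideanSpace ℝ (Fin n) | ∀ i, x i = 0 ∨ x i = 1})
    (X : Set (EuclideanSpace ℝ (Fin n))) (hXne : X.Nonempty)
    (hface : ∃ u : EuclideanSpace ℝ (Fin n),
      X = {ω ∈ Ω | ∀ ω' ∈ Ω, ⟪u, ω'⟫ ≤ ⟪u, ω⟫})
    (νbar : EuclideanSpace ℝ (Fin n)) (hν : νbar ∈ convexHull ℝ Ω)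
    (a : EuclideanSpace ℝ (Fin n))
    (haX : a ∈ affineSpan ℝ X)
    (hproj : ∀ x ∈ affineSpan ℝ X, ⟪νbar - a, x - a⟫ = 0) :
    ∀ ω ∈ Ω, 0 ≤ ⟪νbar - a, ω - a⟫ :=
  hypercube_euclidean_acute_angles_general n Ω hΩ X hface νbar hν a haX hproj
end

section
/- For the simplex outcome set Ω = {e₁,…,e_n} (standard basis vectors in ℝⁿ) and the face X = {e₁,…,e_k} with 1 ≤ k ≤ n, the orthogonal projections e'_j of e_j (for j > k) onto the affine space A' = e₁ + X^⊥ satisfy (e'_j − e₁)·(e'_{j'} − e₁) = 1/k for all distinct j, j' > k; in particular all pairwise inner products of projected directions are positive. -/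
/-!
Put `d = e'_j - e₁` and `d' = e'_{j'} - e₁`; both lie in `X^⊥`, the vectors whose first `k`
coordinates agree. As `e_j - e'_j ⟂ X^⊥`, we get `⟪d, d'⟫ = ⟪e_j - e₁, d'⟫ = d'_j - d'_1`.
Testing `e_{j'} - e'_{j'} ⟂ X^⊥` against `e_j` gives `d'_j = 0`, and against `e_1 + ⋯ + e_k`
gives `k d'_1 = -1`.
-/

open scoped RealInnerProductSpace

open Finset

theorem mem_orthogonal_vectorSpan_iff {V : Type*} [NormedAddCommGroup V] [InnerProductSpace ℝ V]
    {s : Set V} {u : V} :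
    u ∈ (vectorSpan ℝ s)ᗮ ↔ ∀ x ∈ s, ∀ x' ∈ s, ⟪u, x' - x⟫ = 0 := by
  rw [vectorSpan_def, ← Submodule.span_singleton_le_iff_mem, ← Submodule.isOrtho_iff_le,
    Submodule.isOrtho_span]
  simp only [Set.mem_singleton_iff, forall_eq, Set.mem_vsub, vsub_eq_sub]
  exact ⟨fun h x hx x' hx' => h ⟨x', hx', x, hx, rfl⟩,
    by rintro h _ ⟨x', hx', x, hx, rfl⟩; exact h x hx x' hx'⟩

/-- `p - c` is the orthogonal projection of `v - c` onto `K`, seen through inner products. -/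
theorem inner_sub_eq_of_forall_inner_sub_eq_zero {V : Type*} [NormedAddCommGroup V]
    [InnerProductSpace ℝ V] {K : Submodule ℝ V} {c v p w : V} (hp : p - c ∈ K)
    (horth : ∀ a, a - c ∈ K → ⟪v - p, a - p⟫ = 0) (hw : w ∈ K) :
    ⟪p - c, w⟫ = ⟪v - c, w⟫ := by
  have hvp : ⟪v - p, w⟫ = 0 := by
    simpa using horth (p + w) (by simpa [add_sub_right_comm] using K.add_mem hp hw)
  rw [← sub_add_sub_cancel v p c, inner_add_left, hvp, zero_add]

section SimplexFace

variable {ι : Type*} [Fintype ι] [DecidableEq ι]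

def simplexFace (I : Finset ι) : Set (EuclideanSpace ℝ ι) :=
  (fun i => EuclideanSpace.single i 1) '' I

theorem mem_orthogonal_vectorSpan_simplexFace_iff {I : Finset ι} {u : EuclideanSpace ℝ ι} :
    u ∈ (vectorSpan ℝ (simplexFace I))ᗮ ↔ ∀ a ∈ I, ∀ b ∈ I, u a = u b := by
  simp only [mem_orthogonal_vectorSpan_iff, simplexFace, Set.forall_mem_image, mem_coe,
    inner_sub_right, EuclideanSpace.inner_single_right, one_mul, RCLike.conj_to_real, sub_eq_zero]
  exact ⟨fun h a ha b hb => h hb ha, fun h a ha b hb => h b hb a ha⟩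

variable {I : Finset ι} {i₀ j : ι} {d : EuclideanSpace ℝ ι}

theorem orthogonal_simplexFace_apply_eq_zero (hi₀ : i₀ ∈ I)
    (hd : ∀ w ∈ (vectorSpan ℝ (simplexFace I))ᗮ,
      ⟪d, w⟫ = ⟪EuclideanSpace.single j 1 - EuclideanSpace.single i₀ 1, w⟫)
    {i : ι} (hi : i ∉ I) (hij : i ≠ j) : d i = 0 := by
  have hmem : EuclideanSpace.single i (1 : ℝ) ∈ (vectorSpan ℝ (simplexFace I))ᗮ := by
    rw [mem_orthogonal_vectorSpan_simplexFace_iff]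
    intro a ha b hb
    simp [ne_of_mem_of_not_mem ha hi, ne_of_mem_of_not_mem hb hi]
  simpa [inner_sub_left, EuclideanSpace.inner_single_left, EuclideanSpace.inner_single_right,
    hij, (ne_of_mem_of_not_mem hi₀ hi).symm] using hd _ hmem

theorem orthogonal_simplexFace_apply_eq_neg_inv_card (hi₀ : i₀ ∈ I) (hj : j ∉ I)
    (hdK : d ∈ (vectorSpan ℝ (simplexFace I))ᗮ)
    (hd : ∀ w ∈ (vectorSpan ℝ (simplexFace I))ᗮ,
      ⟪d, w⟫ = ⟪EuclideanSpace.single j 1 - EuclideanSpace.single i₀ 1, w⟫)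
    {i : ι} (hi : i ∈ I) : d i = -(#I : ℝ)⁻¹ := by
  set s : EuclideanSpace ℝ ι := ∑ a ∈ I, EuclideanSpace.single a 1
  have hs : ∀ b, s b = if b ∈ I then 1 else 0 := by simp [s]
  have hsK : s ∈ (vectorSpan ℝ (simplexFace I))ᗮ := by
    rw [mem_orthogonal_vectorSpan_simplexFace_iff]
    intro a ha b hb
    simp [hs, ha, hb]
  have hsum : ∑ a ∈ I, d a = -1 := by
    simpa [s, inner_sum, inner_sub_left, EuclideanSpace.inner_single_right, hs, hi₀, hj]
      using hd s hsK
  have hconst : ∑ a ∈ I, d a = #I * d i := by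
    rw [mem_orthogonal_vectorSpan_simplexFace_iff] at hdK
    rw [sum_congr rfl fun a ha => hdK a ha i hi, sum_const, nsmul_eq_mul]
  have hcard : (#I : ℝ) ≠ 0 := by exact_mod_cast (card_pos.2 ⟨i₀, hi₀⟩).ne'
  field_simp
  linarith

end SimplexFace

/-- For the simplex outcomes `Ω = {e₁,…,e_n}` and the face `X = {e₁,…,e_k}`
(`1 ≤ k ≤ n`), the orthogonal projections `e'_j` of `e_j` (for `j > k`, i.e. index
`≥ k` when 0-based) onto `A' = e₁ + X^⊥` satisfy
`⟪e'_j − e₁, e'_{j'} − e₁⟫ = 1/k > 0` for distinct `j, j'`. -/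
theorem simplex_projection_inner (n k : ℕ) (hk1 : 1 ≤ k) (hkn : k ≤ n)
    (X : Set (EuclideanSpace ℝ (Fin n)))
    (hX : X = {v : EuclideanSpace ℝ (Fin n) |
      ∃ i : Fin n, (i : ℕ) < k ∧ v = EuclideanSpace.single i (1 : ℝ)})
    (A' : Set (EuclideanSpace ℝ (Fin n)))
    (hA' : A' = {v : EuclideanSpace ℝ (Fin n) |
      ∃ u : EuclideanSpace ℝ (Fin n),
        (∀ x ∈ X, ∀ x' ∈ X, ⟪u, x' - x⟫ = 0) ∧
        v = EuclideanSpace.single (⟨0, lt_of_lt_of_le hk1 hkn⟩ : Fin n) (1 : ℝ) + u})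
    (j j' : Fin n) (hj : k ≤ (j : ℕ)) (hj' : k ≤ (j' : ℕ)) (hjj' : j ≠ j')
    (p p' : EuclideanSpace ℝ (Fin n))
    (hp : p ∈ A' ∧ ∀ a ∈ A', ⟪EuclideanSpace.single j (1 : ℝ) - p, a - p⟫ = 0)
    (hp' : p' ∈ A' ∧ ∀ a ∈ A', ⟪EuclideanSpace.single j' (1 : ℝ) - p', a - p'⟫ = 0) :
    ⟪p - EuclideanSpace.single (⟨0, lt_of_lt_of_le hk1 hkn⟩ : Fin n) (1 : ℝ),
      p' - EuclideanSpace.single (⟨0, lt_of_lt_of_le hk1 hkn⟩ : Fin n) (1 : ℝ)⟫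
      = 1 / (k : ℝ) ∧
    0 < ⟪p - EuclideanSpace.single (⟨0, lt_of_lt_of_le hk1 hkn⟩ : Fin n) (1 : ℝ),
      p' - EuclideanSpace.single (⟨0, lt_of_lt_of_le hk1 hkn⟩ : Fin n) (1 : ℝ)⟫ := by
  set i₀ : Fin n := ⟨0, lt_of_lt_of_le hk1 hkn⟩
  set e₀ : EuclideanSpace ℝ (Fin n) := EuclideanSpace.single i₀ 1
  set I : Finset (Fin n) := {i | (i : ℕ) < k}
  set K := (vectorSpan ℝ (simplexFace I))ᗮ
  have hI : #I = k := by simp [I, Fin.card_filter_val_lt, hkn]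
  have hi₀ : i₀ ∈ I := by simpa [I, i₀] using Nat.succ_le_iff.mp hk1
  have hjI : j ∉ I := by simpa [I] using hj
  have hj'I : j' ∉ I := by simpa [I] using hj'
  have hA'K : ∀ a, a ∈ A' ↔ a - e₀ ∈ K := by
    have hXI : X = simplexFace I := by ext v; simp [hX, simplexFace, I, eq_comm]
    intro a
    rw [hA', hXI, mem_orthogonal_vectorSpan_iff]
    exact ⟨by rintro ⟨u, hu, rfl⟩; simpa using hu, fun h => ⟨_, h, by abel⟩⟩
  have hproj : ∀ {v q}, (q ∈ A' ∧ ∀ a ∈ A', ⟪v - q, a - q⟫ = 0) →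
      ∀ w ∈ K, ⟪q - e₀, w⟫ = ⟪v - e₀, w⟫ := fun ⟨hqA, hqO⟩ _ hw =>
    inner_sub_eq_of_forall_inner_sub_eq_zero ((hA'K _).1 hqA)
      (fun a ha => hqO a ((hA'K a).2 ha)) hw
  have hp'K : p' - e₀ ∈ K := (hA'K p').1 hp'.1
  have key : ⟪p - e₀, p' - e₀⟫ = 1 / (k : ℝ) :=
    calc _ = ⟪EuclideanSpace.single j 1 - e₀, p' - e₀⟫ := hproj hp _ hp'K
      _ = (p' - e₀ : EuclideanSpace ℝ (Fin n)) j - (p' - e₀ : EuclideanSpace ℝ (Fin n)) i₀ := by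
          simp [e₀, inner_sub_left, EuclideanSpace.inner_single_left]
      _ = 0 - -(k : ℝ)⁻¹ := by
          rw [orthogonal_simplexFace_apply_eq_zero hi₀ (hproj hp') hjI hjj',
            orthogonal_simplexFace_apply_eq_neg_inv_card hi₀ hj'I hp'K (hproj hp') hi₀, hI]
      _ = 1 / k := by ring
  exact ⟨key, key ▸ by positivity⟩
end
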